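/- arXiv:2510.02214 — 3 statements merged into one kernel-verified Lean document; each statement's English description precedes it below -/
import Mathlib

section
/- Let δ and n be positive integers. Let α and β be finite sets with |α| = |β| = δ·n, and let R ⊆ α × β be a relation such that every element a ∈ α is related to exactly δ elements of β. Then the number of bijections e : α → β satisfying R(a, e(a)) for every a ∈ α is at most (δ!)^n. -/
set_option maxHeartbeats 1000000
set_option linter.unusedSectionVars false

open Finset


lemma jensen_pow {ι : Type} [DecidableEq ι] (u : Finset ι) (t : ι → ℕ) (r : ℕ) (hr : u.card ≤ r) :
    ((∑ i ∈ u, t i : ℕ) : ℝ) ^ (∑ i ∈ u, t i) ≤ (r : ℝ) ^ (∑ i ∈ u, t i) * ∏ i ∈ u, (t i : ℝ) ^ (t i) := by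
  set s : ℕ := ∑ i ∈ u, t i with hs
  rcases Nat.eq_zero_or_pos s with h0 | hpos
  · have ht : ∀ i ∈ u, t i = 0 := fun i hi =>
      Finset.sum_eq_zero_iff.mp (hs ▸ h0) i hi
    rw [h0]
    simp only [pow_zero, one_mul]
    rw [Finset.prod_congr rfl (fun i hi => by rw [ht i hi])]
    simp
  · set S : Finset ι := u.filter (fun i => t i ≠ 0) with hS
    have hsumS : ∑ i ∈ S, t i = s := by
      rw [hS, hs, Finset.sum_filter_ne_zero]
    have hsR : (0:ℝ) < s := by exact_mod_cast hpos
    have htS : ∀ i ∈ S, t i ≠ 0 := fun i hi => by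
      simpa [hS] using (Finset.mem_filter.mp hi).2
    have hw1 : ∑ i ∈ S, ((t i : ℝ)/s) = 1 := by
      rw [← Finset.sum_div]
      rw [show ∑ i ∈ S, (t i : ℝ) = (s:ℝ) by exact_mod_cast congrArg Nat.cast hsumS]
      exact div_self hsR.ne'
    have key := Real.geom_mean_le_arith_mean_weighted S (fun i => (t i : ℝ)/s)
      (fun i => (s:ℝ)/(t i)) (fun i _ => by positivity) hw1 (fun i _ => by positivity)
    have harith : ∑ i ∈ S, ((t i : ℝ)/s) * ((s:ℝ)/(t i)) = (S.card : ℝ) := by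
      rw [Finset.card_eq_sum_ones S]
      push_cast
      refine Finset.sum_congr rfl (fun i hi => ?_)
      have h1 : (t i : ℝ) ≠ 0 := Nat.cast_ne_zero.mpr (htS i hi)
      field_simp
    rw [harith] at key
    have key2 : (∏ i ∈ S, ((s:ℝ)/(t i)) ^ ((t i : ℝ)/s)) ^ (s:ℝ) ≤ (S.card : ℝ) ^ (s:ℝ) :=
      Real.rpow_le_rpow (Finset.prod_nonneg (fun i _ => Real.rpow_nonneg (by positivity) _))
        key (by positivity)
    rw [← Real.finset_prod_rpow S _ (fun i _ => Real.rpow_nonneg (by positivity) _) _] at key2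
    have keq : ∀ i ∈ S, (((s:ℝ)/(t i)) ^ ((t i : ℝ)/s)) ^ (s:ℝ) = ((s:ℝ)/(t i)) ^ (t i) := by
      intro i hi
      rw [← Real.rpow_mul (by positivity), div_mul_cancel₀ _ hsR.ne']
      exact Real.rpow_natCast _ _
    rw [Finset.prod_congr rfl keq] at key2
    have hProdPos : (0:ℝ) < ∏ i ∈ S, (t i : ℝ) ^ (t i) := by
      apply Finset.prod_pos
      intro i hi
      have : 0 < t i := Nat.pos_of_ne_zero (htS i hi)
      positivity
    have hLHS : ∏ i ∈ S, ((s:ℝ)/(t i)) ^ (t i) = (s:ℝ)^s / ∏ i ∈ S, (t i : ℝ) ^ (t i) := by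
      rw [Finset.prod_congr rfl (fun i _ => div_pow (s:ℝ) (t i : ℝ) (t i)),
        Finset.prod_div_distrib, Finset.prod_pow_eq_pow_sum, hsumS]
    rw [hLHS] at key2
    have hcard : ((S.card : ℝ)) ^ (s:ℝ) ≤ (r:ℝ)^s := by
      rw [Real.rpow_natCast]
      apply pow_le_pow_left₀ (by positivity)
      exact_mod_cast le_trans (Finset.card_le_card (Finset.filter_subset _ _)) hr
    have hP : ∏ i ∈ S, (t i : ℝ) ^ (t i) = ∏ i ∈ u, (t i : ℝ) ^ (t i) := by
      apply Finset.prod_subset (Finset.filter_subset _ _)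
      intro i _ hi
      have : t i = 0 := by
        by_contra h
        exact hi (by simp [hS, h, Finset.mem_filter]; tauto)
      simp [this]
    rw [div_le_iff₀ hProdPos] at key2
    calc (s:ℝ)^s ≤ (S.card:ℝ)^(s:ℝ) * ∏ i ∈ S, (t i:ℝ)^(t i) := key2
      _ ≤ (r:ℝ)^s * ∏ i ∈ S, (t i:ℝ)^(t i) :=
          mul_le_mul_of_nonneg_right hcard (le_of_lt hProdPos)
      _ = (r:ℝ)^s * ∏ i ∈ u, (t i:ℝ)^(t i) := by rw [hP]


noncomputable def gfact (m : ℕ) : ℝ := (m.factorial : ℝ) ^ ((m : ℝ)⁻¹)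

lemma gfact_nonneg (m : ℕ) : 0 ≤ gfact m := Real.rpow_nonneg (by positivity) _

lemma one_le_gfact (m : ℕ) : 1 ≤ gfact m := by
  rw [gfact, show (1:ℝ) = (1:ℝ) ^ ((m:ℝ)⁻¹) by rw [Real.one_rpow]]
  have h1 : (1:ℝ) ≤ (m.factorial : ℝ) := by
    exact_mod_cast Nat.one_le_iff_ne_zero.mpr (Nat.factorial_ne_zero m)
  exact Real.rpow_le_rpow zero_le_one h1 (by positivity)

lemma gfact_pow_self (m : ℕ) : gfact m ^ m = (m.factorial : ℝ) := by
  rw [gfact, ← Real.rpow_natCast ((m.factorial:ℝ) ^ ((m:ℝ)⁻¹)) m,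
    ← Real.rpow_mul (by positivity)]
  rcases Nat.eq_zero_or_pos m with h | h
  · simp [h]
  · rw [inv_mul_cancel₀ (by exact_mod_cast h.ne' : (m:ℝ) ≠ 0), Real.rpow_one]

set_option linter.unusedSectionVars false

open Finset

section Defs

variable {α β : Type} [Fintype α] [DecidableEq α] [Fintype β] [DecidableEq β]

/-- The set of matchings (bijections compatible with `R`). -/
def mset (R : α → β → Bool) : Finset (α ≃ β) :=
  Finset.univ.filter (fun e => ∀ a, R a (e a) = true)

/-- The number of matchings. -/
def mcount (R : α → β → Bool) : ℕ := (mset R).card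

/-- The degree of a left vertex. -/
def rdeg (R : α → β → Bool) (a : α) : ℕ := (Finset.univ.filter (fun b => R a b = true)).card

/-- The bipartite graph with `a` and `b` deleted. -/
def minor (R : α → β → Bool) (a : α) (b : β) :
    {x : α // x ≠ a} → {y : β // y ≠ b} → Bool := fun x y => R x.1 y.1

/-- Extend an equivalence of the complements to one sending `a` to `b`. -/
def ext1 (a : α) (b : β) (f : {x : α // x ≠ a} ≃ {y : β // y ≠ b}) : α ≃ β :=
  ((Equiv.optionSubtypeNe a).symm.trans f.optionCongr).trans (Equiv.optionSubtypeNe b)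

lemma ext1_apply_eq (a : α) (b : β) (f : {x : α // x ≠ a} ≃ {y : β // y ≠ b}) :
    ext1 a b f a = b := by
  simp [ext1, Equiv.optionSubtypeNe_symm_self]

lemma ext1_apply_ne (a : α) (b : β) (f : {x : α // x ≠ a} ≃ {y : β // y ≠ b})
    {x : α} (h : x ≠ a) : ext1 a b f x = (f ⟨x, h⟩).1 := by
  simp [ext1, Equiv.optionSubtypeNe_symm_of_ne h]

/-- Restrict an equivalence sending `a` to `b` to the complements. -/
def res1 (a : α) (b : β) (e : α ≃ β) (hb : e a = b) :
    {x : α // x ≠ a} ≃ {y : β // y ≠ b} :=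
  Equiv.subtypeEquiv e (fun x => by
    constructor
    · intro hx hex
      exact hx (e.injective (by rw [hex, hb]))
    · intro hex hx
      exact hex (by rw [hx, hb]))

lemma res1_apply (a : α) (b : β) (e : α ≃ β) (hb : e a = b) (x : {x : α // x ≠ a}) :
    (res1 a b e hb x).1 = e x.1 := rfl

lemma fiber_card (R : α → β → Bool) (a : α) (b : β) (hab : R a b = true) :
    ((mset R).filter (fun e => e a = b)).card = mcount (minor R a b) := by
  rw [mcount]
  refine Finset.card_bij' (fun e he => res1 a b e (by exact (Finset.mem_filter.mp he).2))
    (fun f _ => ext1 a b f) ?_ ?_ ?_ ?_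
  · intro e he
    have he' : e ∈ mset R := (Finset.mem_filter.mp he).1
    have hR : ∀ x, R x (e x) = true := by
      simpa [mset] using he'
    simp only [mset, Finset.mem_filter, Finset.mem_univ, true_and]
    intro x
    exact hR x.1
  · intro f hf
    have hR : ∀ x, minor R a b x (f x) = true := by
      simpa [mset] using hf
    rw [Finset.mem_filter]
    refine ⟨?_, ext1_apply_eq a b f⟩
    simp only [mset, Finset.mem_filter, Finset.mem_univ, true_and]
    intro x
    by_cases hx : x = a
    · rw [hx, ext1_apply_eq]
      exact hab
    · rw [ext1_apply_ne a b f hx]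
      exact hR ⟨x, hx⟩
  · intro e he
    apply Equiv.ext
    intro x
    by_cases hx : x = a
    · rw [hx, ext1_apply_eq]
      exact ((Finset.mem_filter.mp he).2).symm
    · rw [ext1_apply_ne _ _ _ hx, res1_apply]
  · intro f hf
    apply Equiv.ext
    intro x
    apply Subtype.ext
    rw [res1_apply]
    rw [ext1_apply_ne a b f x.2]

lemma expansion (R : α → β → Bool) (a : α) :
    mcount R = ∑ b ∈ Finset.univ.filter (fun b => R a b = true), mcount (minor R a b) := by
  rw [mcount, Finset.card_eq_sum_card_fiberwise (f := fun e => e a)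
    (t := Finset.univ.filter (fun b => R a b = true)) ?_]
  · refine Finset.sum_congr rfl (fun b hb => ?_)
    exact fiber_card R a b (by simpa using hb)
  · intro e he
    simp only [Finset.mem_filter, Finset.mem_univ, true_and]
    have : ∀ x, R x (e x) = true := by simpa [mset] using he
    simpa using this a

/-- Degrees in the minor. -/
lemma rdeg_minor (R : α → β → Bool) (a : α) (b : β) (x : {x : α // x ≠ a}) :
    rdeg (minor R a b) x = if R x.1 b = true then rdeg R x.1 - 1 else rdeg R x.1 := by
  have h1 : rdeg (minor R a b) x
      = ((Finset.univ.filter (fun y : β => R x.1 y = true)).erase b).card := by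
    rw [rdeg]
    refine Finset.card_bij' (fun y _ => y.1)
      (fun y hy => (⟨y, by exact (Finset.mem_erase.mp hy).1⟩ : {y : β // y ≠ b}))
      ?_ ?_ ?_ ?_
    · intro y hy
      rw [Finset.mem_erase]
      exact ⟨y.2, Finset.mem_filter.mpr ⟨Finset.mem_univ _, (Finset.mem_filter.mp hy).2⟩⟩
    · intro y hy
      simp only [Finset.mem_filter, Finset.mem_univ, true_and, minor]
      exact Finset.mem_filter.mpr ⟨Finset.mem_univ _, (Finset.mem_filter.mp (Finset.mem_erase.mp hy).2).2⟩
    · intro y _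
      rfl
    · intro y _
      rfl
  rw [h1]
  by_cases hb : R x.1 b = true
  · rw [if_pos hb, Finset.card_erase_of_mem (by simp [hb]), rdeg]
  · rw [if_neg hb, Finset.erase_eq_of_notMem (by simp [hb]), rdeg]

/-- For a matching `e` and a vertex `j`, exactly `rdeg R j - 1` of the other
vertices `i ≠ j` have `e i` a neighbour of `j`. -/
lemma count_nbrs (R : α → β → Bool) (e : α ≃ β) (he : ∀ x, R x (e x) = true) (j : α) :
    ((Finset.univ.erase j).filter (fun i => R j (e i) = true)).card + 1 = rdeg R j := by
  have h1 : ((Finset.univ.erase j).filter (fun i => R j (e i) = true)).card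
      = ((Finset.univ.filter (fun y : β => R j y = true)).erase (e j)).card := by
    refine Finset.card_bij' (fun i _ => e i) (fun y _ => e.symm y) ?_ ?_ ?_ ?_
    · intro i hi
      rw [Finset.mem_erase]
      obtain ⟨hi1, hi2⟩ := Finset.mem_filter.mp hi
      refine ⟨fun h => (Finset.mem_erase.mp hi1).1 (e.injective h), by simp [hi2]⟩
    · intro y hy
      obtain ⟨hy1, hy2⟩ := Finset.mem_erase.mp hy
      rw [Finset.mem_filter, Finset.mem_erase]
      refine ⟨⟨fun h => hy1 ?_, Finset.mem_univ _⟩, ?_⟩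
      · rw [← h]; simp
      · simpa using (Finset.mem_filter.mp hy2).2
    · intro i _; simp
    · intro y _; simp
  rw [h1, Finset.card_erase_add_one (by simp [he j]), rdeg]

end Defs


/-- Swap a double product over "all pairs of distinct indices". -/
lemma prod_erase_swap {α : Type} [Fintype α] [DecidableEq α] (F : α → α → ℝ)
    (hF : ∀ j x, F j x ≠ 0) :
    ∏ j : α, ∏ x ∈ Finset.univ.erase j, F j x
      = ∏ x : α, ∏ j ∈ Finset.univ.erase x, F j x := by
  have h1 : ∀ j : α, ∏ x ∈ Finset.univ.erase j, F j x = (∏ x : α, F j x) / F j j := by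
    intro j
    rw [eq_div_iff (hF j j)]
    exact Finset.prod_erase_mul _ _ (Finset.mem_univ j)
  have h2 : ∀ x : α, ∏ j ∈ Finset.univ.erase x, F j x = (∏ j : α, F j x) / F x x := by
    intro x
    rw [eq_div_iff (hF x x)]
    exact Finset.prod_erase_mul _ _ (Finset.mem_univ x)
  rw [Finset.prod_congr rfl (fun j _ => h1 j), Finset.prod_congr rfl (fun x _ => h2 x)]
  rw [Finset.prod_div_distrib, Finset.prod_div_distrib, Finset.prod_comm]

lemma bregman_aux (N : ℕ) :
    ∀ (α β : Type) [Fintype α] [DecidableEq α] [Fintype β] [DecidableEq β],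
      Fintype.card α = N → ∀ R : α → β → Bool,
      (mcount R : ℝ) ≤ ∏ a : α, gfact (rdeg R a) := by
  induction N with
  | zero =>
    intro α β _ _ _ _ hcard R
    have hemp : IsEmpty α := Fintype.card_eq_zero_iff.mp hcard
    have hsub : Subsingleton (α ≃ β) := ⟨fun e f => Equiv.ext (fun x => isEmptyElim x)⟩
    have h1 : mcount R ≤ 1 := by
      calc mcount R ≤ (Finset.univ : Finset (α ≃ β)).card :=
            Finset.card_le_card (Finset.filter_subset _ _)
        _ = Fintype.card (α ≃ β) := rfl
        _ ≤ 1 := Fintype.card_le_one_iff_subsingleton.mpr hsub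
    have h2 : (∏ a : α, gfact (rdeg R a)) = 1 := by
      rw [Finset.univ_eq_empty, Finset.prod_empty]
    rw [h2]
    exact_mod_cast h1
  | succ n IH =>
    intro α β _ _ _ _ hcard R
    rcases Nat.eq_zero_or_pos (mcount R) with h0 | hpos
    · rw [h0]
      push_cast
      exact Finset.prod_nonneg (fun a _ => gfact_nonneg _)
    obtain ⟨e₀, he₀⟩ : ∃ e, e ∈ mset R := Finset.card_pos.mp hpos
    have he₀R : ∀ x, R x (e₀ x) = true := by simpa [mset] using he₀
    have hβ : Fintype.card β = n + 1 := by
      rw [← Fintype.card_congr e₀, hcard]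
    have hrpos : ∀ j : α, 1 ≤ rdeg R j := by
      intro j
      refine Finset.card_pos.mpr ⟨e₀ j, ?_⟩
      simp [he₀R j]
    have hrle : ∀ j : α, rdeg R j ≤ n + 1 := fun j => by
      calc rdeg R j ≤ (Finset.univ : Finset β).card := Finset.card_filter_le _ _
        _ = n + 1 := by rw [Finset.card_univ, hβ]
    set p : ℕ := mcount R with hp
    -- Step A/B : per-row inequality from Jensen + fiber decomposition
    have stepA : ∀ i : α, ((p : ℝ)) ^ p
        ≤ (rdeg R i : ℝ) ^ p * ∏ e ∈ mset R, (mcount (minor R i (e i)) : ℝ) := by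
      intro i
      have hj := jensen_pow (Finset.univ.filter (fun b => R i b = true))
        (fun b => mcount (minor R i b)) (rdeg R i) le_rfl
      rw [← expansion R i] at hj
      have hB : (∏ b ∈ Finset.univ.filter (fun b => R i b = true),
            (mcount (minor R i b) : ℝ) ^ (mcount (minor R i b)))
          = ∏ e ∈ mset R, (mcount (minor R i (e i)) : ℝ) := by
        rw [← Finset.prod_fiberwise_of_maps_to (g := fun e : α ≃ β => e i) (s := mset R) (t := Finset.univ.filter (fun b => R i b = true)) (fun e he => by
            simp only [Finset.mem_filter, Finset.mem_univ, true_and]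
            have hh : ∀ x, R x (e x) = true := by simpa [mset] using he
            exact hh i) (fun e => (mcount (minor R i (e i)) : ℝ))]
        refine Finset.prod_congr rfl (fun b hb => ?_)
        have hcongr : ∀ e ∈ (mset R).filter (fun e => e i = b),
            (mcount (minor R i (e i)) : ℝ) = (mcount (minor R i b) : ℝ) := by
          intro e he
          rw [(Finset.mem_filter.mp he).2]
        rw [Finset.prod_congr rfl hcongr, Finset.prod_const,
          fiber_card R i b (by simpa using hb)]
      rw [hB] at hj
      exact hj
    -- assemble the global product inequality
    have big : ((p:ℝ)) ^ ((n+1) * p)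
        ≤ ∏ e ∈ mset R, ((∏ j : α, (rdeg R j : ℝ))
            * ∏ j : α, (mcount (minor R j (e j)) : ℝ)) := by
      have hpow : ((p:ℝ)) ^ ((n+1) * p) = ∏ _i : α, ((p:ℝ)) ^ p := by
        rw [Finset.prod_const, Finset.card_univ, hcard, ← pow_mul, mul_comm p (n+1)]
      rw [hpow]
      have h1 : ∏ _i : α, ((p:ℝ)) ^ p
          ≤ ∏ i : α, ((rdeg R i : ℝ) ^ p * ∏ e ∈ mset R, (mcount (minor R i (e i)) : ℝ)) :=
        Finset.prod_le_prod (fun i _ => by positivity) (fun i _ => stepA i)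
      refine h1.trans (le_of_eq ?_)
      calc ∏ i : α, ((rdeg R i : ℝ) ^ p * ∏ e ∈ mset R, (mcount (minor R i (e i)) : ℝ))
          = (∏ i : α, (rdeg R i : ℝ)) ^ p
              * ∏ e ∈ mset R, ∏ i : α, (mcount (minor R i (e i)) : ℝ) := by
            rw [Finset.prod_mul_distrib, Finset.prod_pow, Finset.prod_comm]
        _ = ∏ e ∈ mset R, ((∏ j : α, (rdeg R j : ℝ))
              * ∏ j : α, (mcount (minor R j (e j)) : ℝ)) := by
            rw [Finset.prod_mul_distrib, Finset.prod_const]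
            rfl
    -- Step C/D : per-matching bound
    have stepCD : ∀ e ∈ mset R,
        (∏ j : α, (rdeg R j : ℝ)) * ∏ j : α, (mcount (minor R j (e j)) : ℝ)
          ≤ (∏ j : α, gfact (rdeg R j)) ^ (n + 1) := by
      intro e he
      have heR : ∀ x, R x (e x) = true := by simpa [mset] using he
      have hcard' : ∀ j : α, Fintype.card {x : α // x ≠ j} = n := by
        intro j
        have h1 : Fintype.card {x : α // ¬ (x = j)}
            = Fintype.card α - Fintype.card {x : α // x = j} :=
          Fintype.card_subtype_compl _
        rw [Fintype.card_subtype_eq, hcard] at h1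
        simpa using h1
      have hC : ∀ j : α, (mcount (minor R j (e j)) : ℝ)
          ≤ ∏ x ∈ Finset.univ.erase j,
              gfact (if R x (e j) = true then rdeg R x - 1 else rdeg R x) := by
        intro j
        have h1 := IH {x : α // x ≠ j} {y : β // y ≠ e j} (hcard' j) (minor R j (e j))
        refine h1.trans (le_of_eq ?_)
        have h2 : ∏ x : {x : α // x ≠ j}, gfact (rdeg (minor R j (e j)) x)
            = ∏ x : {x : α // x ≠ j},
                gfact (if R x.1 (e j) = true then rdeg R x.1 - 1 else rdeg R x.1) :=
          Finset.prod_congr rfl (fun x _ => by rw [rdeg_minor])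
        have h3 : ∏ x ∈ Finset.univ.erase j,
              gfact (if R x (e j) = true then rdeg R x - 1 else rdeg R x)
            = ∏ x : {x : α // x ≠ j},
                gfact (if R x.1 (e j) = true then rdeg R x.1 - 1 else rdeg R x.1) :=
          Finset.prod_subtype _ (fun x => by simp) _
        rw [h2, ← h3]
      have hgne : ∀ (j x : α),
          gfact (if R x (e j) = true then rdeg R x - 1 else rdeg R x) ≠ 0 :=
        fun j x => (lt_of_lt_of_le zero_lt_one (one_le_gfact _)).ne'
      have hswap := prod_erase_swap
        (fun j x => gfact (if R x (e j) = true then rdeg R x - 1 else rdeg R x)) hgne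
      have hinner : ∀ x : α, (rdeg R x : ℝ) * ∏ j ∈ Finset.univ.erase x,
          gfact (if R x (e j) = true then rdeg R x - 1 else rdeg R x)
            = gfact (rdeg R x) ^ (n + 1) := by
        intro x
        have hr1 : 1 ≤ rdeg R x := hrpos x
        have hrn : rdeg R x ≤ n + 1 := hrle x
        have hcnt : ((Finset.univ.erase x).filter (fun j => R x (e j) = true)).card
            = rdeg R x - 1 := by
          have := count_nbrs R e heR x
          omega
        have hcnt' : ((Finset.univ.erase x).filter (fun j => ¬ (R x (e j) = true))).card
            = n - (rdeg R x - 1) := by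
          have htot := Finset.card_filter_add_card_filter_not
            (s := Finset.univ.erase x) (p := fun j => R x (e j) = true)
          have hc : (Finset.univ.erase x).card = n := by
            rw [Finset.card_erase_of_mem (Finset.mem_univ x), Finset.card_univ, hcard]
            omega
          omega
        have hsplit : ∏ j ∈ Finset.univ.erase x,
            gfact (if R x (e j) = true then rdeg R x - 1 else rdeg R x)
              = gfact (rdeg R x - 1) ^ (rdeg R x - 1)
                * gfact (rdeg R x) ^ (n - (rdeg R x - 1)) := by
          rw [Finset.prod_congr rfl (fun j _ => apply_ite gfact (R x (e j) = true)
            (rdeg R x - 1) (rdeg R x)), Finset.prod_ite, Finset.prod_const,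
            Finset.prod_const, hcnt, hcnt']
        rw [hsplit, gfact_pow_self]
        have e2 : gfact (rdeg R x) ^ (n+1)
            = gfact (rdeg R x) ^ (rdeg R x) * gfact (rdeg R x) ^ (n + 1 - rdeg R x) := by
          rw [← pow_add]
          congr 1
          omega
        rw [e2, gfact_pow_self]
        have e3 : n - (rdeg R x - 1) = n + 1 - rdeg R x := by omega
        rw [e3, ← mul_assoc]
        congr 1
        have e4 : ((rdeg R x : ℝ) * ((rdeg R x - 1).factorial : ℝ))
            = ((rdeg R x * (rdeg R x - 1).factorial : ℕ) : ℝ) := by push_cast; ring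
        rw [e4, Nat.mul_factorial_pred (by omega)]
      calc (∏ j : α, (rdeg R j : ℝ)) * ∏ j : α, (mcount (minor R j (e j)) : ℝ)
          ≤ (∏ j : α, (rdeg R j : ℝ)) * ∏ j : α, ∏ x ∈ Finset.univ.erase j,
              gfact (if R x (e j) = true then rdeg R x - 1 else rdeg R x) :=
            mul_le_mul_of_nonneg_left
              (Finset.prod_le_prod (fun j _ => by positivity) (fun j _ => hC j))
              (Finset.prod_nonneg (fun j _ => by positivity))
        _ = (∏ x : α, (rdeg R x : ℝ)) * ∏ x : α, ∏ j ∈ Finset.univ.erase x,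
              gfact (if R x (e j) = true then rdeg R x - 1 else rdeg R x) := by
            rw [hswap]
        _ = ∏ x : α, ((rdeg R x : ℝ) * ∏ j ∈ Finset.univ.erase x,
              gfact (if R x (e j) = true then rdeg R x - 1 else rdeg R x)) :=
            (Finset.prod_mul_distrib).symm
        _ = ∏ x : α, gfact (rdeg R x) ^ (n + 1) :=
            Finset.prod_congr rfl (fun x _ => hinner x)
        _ = (∏ x : α, gfact (rdeg R x)) ^ (n + 1) := Finset.prod_pow _ _ _
    -- combine
    have final : ((p:ℝ)) ^ ((n+1) * p) ≤ (∏ j : α, gfact (rdeg R j)) ^ ((n+1) * p) := by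
      calc ((p:ℝ)) ^ ((n+1)*p)
          ≤ ∏ e ∈ mset R, ((∏ j : α, (rdeg R j : ℝ))
              * ∏ j : α, (mcount (minor R j (e j)) : ℝ)) := big
        _ ≤ ∏ e ∈ mset R, (∏ j : α, gfact (rdeg R j)) ^ (n+1) :=
            Finset.prod_le_prod (fun e _ => by positivity) stepCD
        _ = ((∏ j : α, gfact (rdeg R j)) ^ (n+1)) ^ p := by
            rw [Finset.prod_const]
            rfl
        _ = (∏ j : α, gfact (rdeg R j)) ^ ((n+1)*p) := by rw [← pow_mul]
    refine (pow_le_pow_iff_left₀ (by positivity) (Finset.prod_nonneg (fun j _ => gfact_nonneg _)) ?_).mp final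
    positivity

/-- Regular bipartite case of the Alon–Friedland bound: if `α` and `β` both have
cardinality `δ * n` and every `a : α` is related by `R` to exactly `δ` elements of `β`,
then the number of bijections `e : α ≃ β` with `R a (e a)` for all `a` is at most `(δ!)^n`. -/
theorem stmt_0 (δ n : ℕ) (hδ : 0 < δ) (hn : 0 < n)
    (α β : Type) [Fintype α] [Fintype β]
    (hα : Fintype.card α = δ * n) (hβ : Fintype.card β = δ * n)
    (R : α → β → Prop)
    (hreg : ∀ a : α, Nat.card {b : β // R a b} = δ) :
    Nat.card {e : α ≃ β // ∀ a : α, R a (e a)} ≤ (Nat.factorial δ) ^ n := by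
  classical
  set R' : α → β → Bool := fun a b => decide (R a b) with hR'
  have hiff : ∀ a b, R' a b = true ↔ R a b := by
    intro a b
    simp [hR']
  have hcount : Nat.card {e : α ≃ β // ∀ a, R a (e a)} = mcount R' := by
    rw [Nat.card_congr (Equiv.subtypeEquivRight (q := fun e : α ≃ β => ∀ a, R' a (e a) = true)
      (fun e => by simp [hiff]))]
    rw [Nat.card_eq_fintype_card, mcount, mset, Fintype.card_subtype]
  have hdeg : ∀ a : α, rdeg R' a = δ := by
    intro a
    rw [← hreg a, Nat.card_congr (Equiv.subtypeEquivRight (q := fun b => R' a b = true)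
      (fun b => (hiff a b).symm))]
    rw [Nat.card_eq_fintype_card, rdeg, Fintype.card_subtype]
  have hb := bregman_aux (δ * n) α β hα R'
  have hprod : (∏ a : α, gfact (rdeg R' a)) = ((Nat.factorial δ) ^ n : ℕ) := by
    rw [Finset.prod_congr rfl (fun a _ => by rw [hdeg a]), Finset.prod_const,
      Finset.card_univ, hα]
    rw [pow_mul, gfact_pow_self]
    push_cast
    ring
  rw [hprod] at hb
  rw [hcount]
  exact_mod_cast hb
end

section
/- Let M be a square real matrix with nonnegative entries, and let λ > 0 be a real number such that λ is a root of the characteristic polynomial of M (viewed over ℂ) and every complex root μ of the characteristic polynomial with μ ≠ λ satisfies |μ| < λ. Then the sequence (trace(M^n))^{1/n} converges to λ as n → ∞. -/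
open Filter Topology

section AuxTracePow
open Polynomial Matrix


section helpers
variable {n : Type*} [Fintype n] [DecidableEq n]

lemma aux_conj_pow (P Q A : Matrix n n ℂ) (hPQ : P * Q = 1) (p : ℕ) :
    (Q * A * P) ^ p = Q * A ^ p * P := by
  induction p with
  | zero =>
      have hQP : Q * P = 1 := mul_eq_one_comm.mp hPQ
      simp [hQP]
  | succ p ih =>
      have h2 : P * (Q * (A * P)) = A * P := by
        rw [← Matrix.mul_assoc, hPQ, Matrix.one_mul]
      rw [pow_succ, ih, pow_succ]
      simp only [Matrix.mul_assoc, h2]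

lemma aux_trace_conj_pow (P Q A : Matrix n n ℂ) (hPQ : P * Q = 1) (p : ℕ) :
    ((Q * A * P) ^ p).trace = (A ^ p).trace := by
  rw [aux_conj_pow P Q A hPQ, Matrix.trace_mul_comm, ← Matrix.mul_assoc, hPQ, Matrix.one_mul]

lemma aux_charpoly_conj (P Q A : Matrix n n ℂ) (hPQ : P * Q = 1) :
    (Q * A * P).charpoly = A.charpoly := by
  have hQP : Q * P = 1 := mul_eq_one_comm.mp hPQ
  have hPQ' : P.map C * Q.map C = 1 := by
    rw [← Matrix.map_mul, hPQ, Matrix.map_one C C.map_zero C.map_one]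
  have hQP' : Q.map C * P.map C = 1 := mul_eq_one_comm.mp hPQ'
  have hcomm : ∀ (M : Matrix n n ℂ[X]), scalar n (X : ℂ[X]) * M = M * scalar n X :=
    fun M => (scalar_commute (X : ℂ[X]) (fun r' => mul_comm _ _) M).eq
  have h1 : Q.map C * scalar n (X : ℂ[X]) * P.map C = scalar n X := by
    rw [Matrix.mul_assoc, hcomm (P.map C), ← Matrix.mul_assoc, hQP', Matrix.one_mul]
  have hch : charmatrix (Q * A * P) = Q.map C * charmatrix A * P.map C := by
    unfold charmatrix
    simp only [RingHom.mapMatrix_apply]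
    rw [Matrix.map_mul, Matrix.map_mul, Matrix.mul_sub, Matrix.sub_mul, h1]
  rw [Matrix.charpoly, Matrix.charpoly, hch, Matrix.det_mul, Matrix.det_mul]
  have hd : (Q.map C).det * (P.map C).det = 1 := by rw [← Matrix.det_mul, hQP', Matrix.det_one]
  calc (Q.map C).det * (charmatrix A).det * (P.map C).det
      = (Q.map C).det * (P.map C).det * (charmatrix A).det := by ring
    _ = (charmatrix A).det := by rw [hd, one_mul]

lemma aux_exists_eigen (A : Matrix n n ℂ) {μ : ℂ}
    (h : A.charpoly.IsRoot μ) : ∃ v, v ≠ 0 ∧ A *ᵥ v = μ • v := by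
  have hdet : (μ • (1 : Matrix n n ℂ) - A).det = 0 := by
    have h2 : ((charmatrix A).map (evalRingHom μ)).det = 0 := by
      have h4 := (evalRingHom μ).map_det (charmatrix A)
      rw [RingHom.mapMatrix_apply] at h4
      rw [← h4]
      exact h
    have h3 : (charmatrix A).map (evalRingHom μ) = μ • (1 : Matrix n n ℂ) - A := by
      ext i j
      by_cases hij : i = j
      · subst hij
        simp [charmatrix_apply_eq, Matrix.one_apply_eq]
      · simp [charmatrix_apply_ne _ _ _ hij, Matrix.one_apply_ne hij]
    rwa [h3] at h2
  obtain ⟨v, hv, hv0⟩ := Matrix.exists_mulVec_eq_zero_iff.mpr hdet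
  refine ⟨v, hv, ?_⟩
  rw [Matrix.sub_mulVec, sub_eq_zero, Matrix.smul_mulVec, Matrix.one_mulVec] at hv0
  exact hv0.symm

end helpers

lemma aux_trace_submatrix {n α : Type*} [Fintype n] [Fintype α]
    (e : α ≃ n) (M : Matrix n n ℂ) : (M.submatrix e e).trace = M.trace := by
  simp only [Matrix.trace, Matrix.diag, Matrix.submatrix_apply]
  exact Equiv.sum_comp e (fun j => M j j)

lemma aux_trace_fromBlocks {α β : Type*} [Fintype α] [Fintype β]
    (a : Matrix α α ℂ) (b : Matrix α β ℂ) (c : Matrix β α ℂ) (d : Matrix β β ℂ) :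
    (fromBlocks a b c d).trace = a.trace + d.trace := by
  simp [Matrix.trace, Fintype.sum_sum_type, Matrix.fromBlocks, Matrix.diag]

lemma aux_pow_fromBlocks {α β : Type*} [Fintype α] [Fintype β] [DecidableEq α] [DecidableEq β]
    (a : Matrix α α ℂ) (b : Matrix α β ℂ) (d : Matrix β β ℂ) (p : ℕ) :
    ∃ y, (fromBlocks a b 0 d) ^ p = fromBlocks (a ^ p) y 0 (d ^ p) := by
  induction p with
  | zero => exact ⟨0, by simp [Matrix.fromBlocks_one]⟩
  | succ p ih =>
      obtain ⟨y, hy⟩ := ih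
      refine ⟨a ^ p * b + y * d, ?_⟩
      rw [pow_succ, hy, Matrix.fromBlocks_multiply]
      simp [pow_succ]

lemma aux_trace_pow (k : ℕ) :
    ∀ (n : Type) [Fintype n] [DecidableEq n], Fintype.card n = k →
      ∀ (A : Matrix n n ℂ) (p : ℕ),
        (A ^ p).trace = (A.charpoly.roots.map (· ^ p)).sum := by
  induction k with
  | zero =>
      intro n _ _ hn A p
      haveI : IsEmpty n := Fintype.card_eq_zero_iff.mp hn
      have h2 := A.charpoly_natDegree_eq_dim
      rw [hn] at h2
      have h1 : A.charpoly = 1 := A.charpoly_monic.natDegree_eq_zero.mp h2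
      rw [h1, roots_one]
      simp [Matrix.trace_eq_zero_of_isEmpty]
  | succ k ih =>
      intro n _ _ hn A p
      have hdeg : 0 < A.charpoly.natDegree := by rw [A.charpoly_natDegree_eq_dim, hn]; omega
      obtain ⟨μ, hμ⟩ := Complex.exists_root (natDegree_pos_iff_degree_pos.mp hdeg)
      obtain ⟨v, hv0, hAv⟩ := aux_exists_eigen A hμ
      obtain ⟨i, hi⟩ : ∃ i, v i ≠ 0 := by
        by_contra hc
        push_neg at hc
        exact hv0 (funext fun j => hc j)
      set P : Matrix n n ℂ :=
        1 + Matrix.replicateCol Unit (v - Pi.single i (1:ℂ)) * Matrix.replicateRow Unit (Pi.single i (1:ℂ)) with hP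
      have hPcol : ∀ j, P j i = v j := by
        intro j
        rw [hP]
        simp only [Matrix.add_apply, Matrix.mul_apply, Matrix.replicateCol_apply, Matrix.replicateRow_apply,
          Finset.univ_unique, Finset.sum_singleton, Pi.sub_apply, Pi.single_eq_same, mul_one]
        by_cases hj : j = i
        · subst hj; simp [Matrix.one_apply_eq]
        · simp [Matrix.one_apply_ne hj, Pi.single_eq_of_ne hj]
      have hdetP : P.det = v i := by
        rw [hP, Matrix.det_one_add_replicateCol_mul_replicateRow, single_one_dotProduct]
        simp
      have hPunit : IsUnit P.det := by rw [hdetP]; exact Ne.isUnit hi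
      set Q := P⁻¹ with hQ
      have hPQ : P * Q = 1 := Matrix.mul_nonsing_inv P hPunit
      have hQP : Q * P = 1 := Matrix.nonsing_inv_mul P hPunit
      set B := Q * A * P with hB
      have hPi : P *ᵥ Pi.single i (1:ℂ) = v := by
        rw [Matrix.mulVec_single_one]
        funext j
        exact hPcol j
      have hBi : B *ᵥ Pi.single i (1:ℂ) = μ • (Pi.single i (1:ℂ) : n → ℂ) := by
        have e1 : Q *ᵥ v = Pi.single i (1:ℂ) := by
          rw [← hPi, Matrix.mulVec_mulVec, hQP, Matrix.one_mulVec]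
        rw [hB, ← Matrix.mulVec_mulVec, ← Matrix.mulVec_mulVec, hPi, hAv,
          Matrix.mulVec_smul, e1]
      have hBcol : ∀ j, B j i = μ * (Pi.single i (1:ℂ) : n → ℂ) j := by
        intro j
        have h5 := congrFun hBi j
        rw [Matrix.mulVec_single_one] at h5
        simpa [Matrix.transpose_apply, Pi.smul_apply, smul_eq_mul] using h5
      let e : {x : n // x = i} ⊕ {x : n // ¬x = i} ≃ n := Equiv.sumCompl (· = i)
      haveI : Unique {x : n // x = i} := ⟨⟨⟨i, rfl⟩⟩, fun a => Subtype.ext a.2⟩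
      set D : Matrix {x : n // ¬x = i} {x : n // ¬x = i} ℂ :=
        Matrix.of (fun a b => B a.1 b.1) with hD
      set b12 : Matrix {x : n // x = i} {x : n // ¬x = i} ℂ :=
        Matrix.of (fun a b => B a.1 b.1) with hb12
      set a11 : Matrix {x : n // x = i} {x : n // x = i} ℂ :=
        Matrix.of (fun _ _ => μ) with ha11
      have hCeq : B.submatrix e e = fromBlocks a11 b12 0 D := by
        ext x y
        rcases x with x | x <;> rcases y with y | y
        · simp only [Matrix.submatrix_apply, Matrix.fromBlocks_apply₁₁, ha11, Matrix.of_apply]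
          have hex : e (Sum.inl x) = i := x.2
          have hey : e (Sum.inl y) = i := y.2
          rw [hex, hey, hBcol i, Pi.single_eq_same, mul_one]
        · rfl
        · simp only [Matrix.submatrix_apply, Matrix.fromBlocks_apply₂₁, Matrix.zero_apply]
          have hey : e (Sum.inl y) = i := y.2
          have hex : e (Sum.inr x) = x.1 := rfl
          rw [hex, hey, hBcol x.1, Pi.single_eq_of_ne x.2, mul_zero]
        · rfl
      -- 1x1 block facts
      have ha11_smul : a11 = μ • (1 : Matrix {x : n // x = i} {x : n // x = i} ℂ) := by
        ext x y
        have hxy : x = y := Subsingleton.elim x y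
        subst hxy
        simp [ha11, Matrix.one_apply_eq]
      have htr_a : (a11 ^ p).trace = μ ^ p := by
        rw [ha11_smul, _root_.smul_pow, one_pow, Matrix.trace_smul, Matrix.trace_one]
        simp
      have hchar_a : a11.charpoly = X - C μ := by
        rw [Matrix.charpoly, Matrix.det_unique, charmatrix_apply_eq]
        simp [ha11]
      have hsub_pow : ∀ q : ℕ, (B ^ q).submatrix e e = (B.submatrix e e) ^ q := by
        intro q
        have h6 : ∀ (M : Matrix n n ℂ), M.submatrix e e = Matrix.reindex e.symm e.symm M := by
          intro M; ext x y; simp [Matrix.reindex_apply]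
        rw [h6, h6]
        have h8 := map_pow (Matrix.reindexAlgEquiv ℂ ℂ e.symm) B q
        simpa [Matrix.reindexAlgEquiv_apply] using h8
      obtain ⟨y, hy⟩ := aux_pow_fromBlocks a11 b12 D p
      have htr : (A ^ p).trace = μ ^ p + (D ^ p).trace := by
        rw [← aux_trace_conj_pow P Q A hPQ p, ← hB, ← aux_trace_submatrix e (B ^ p),
          hsub_pow p, hCeq, hy, aux_trace_fromBlocks, htr_a]
      have hconj : A.charpoly = (B.submatrix e e).charpoly := by
        have h7 : B.submatrix e e = Matrix.reindex e.symm e.symm B := by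
          ext x y; simp [Matrix.reindex_apply]
        rw [h7, Matrix.charpoly_reindex, hB, aux_charpoly_conj P Q A hPQ]
      have hroots : A.charpoly.roots = μ ::ₘ D.charpoly.roots := by
        rw [hconj, hCeq, Matrix.charpoly_fromBlocks_zero₂₁,
          roots_mul (((a11.charpoly_monic).mul (D.charpoly_monic)).ne_zero),
          hchar_a, roots_X_sub_C, Multiset.singleton_add]
      have hcard : Fintype.card {x : n // ¬x = i} = k := by
        have h1 : Fintype.card {x : n // x = i} = 1 := Fintype.card_subtype_eq i
        have h2 := Fintype.card_congr e
        rw [Fintype.card_sum, h1, hn] at h2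
        omega
      have hIH := ih {x : n // ¬x = i} hcard D p
      rw [htr, hroots, Multiset.map_cons, Multiset.sum_cons, hIH]

end AuxTracePow

open Polynomial Matrix in
/-- If `M` is a nonnegative square real matrix and `λ > 0` is a root of its characteristic
polynomial (over `ℂ`) such that every other complex root has strictly smaller modulus, then
`(trace(M^n))^{1/n} → λ`. -/
theorem stmt_2 (m : ℕ) (M : Matrix (Fin m) (Fin m) ℝ)
    (hM : ∀ i j, 0 ≤ M i j)
    (lam : ℝ) (hlam : 0 < lam)
    (hroot : ((M.charpoly).map (algebraMap ℝ ℂ)).IsRoot (lam : ℂ))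
    (hmax : ∀ μ : ℂ, ((M.charpoly).map (algebraMap ℝ ℂ)).IsRoot μ → μ ≠ (lam : ℂ) →
      ‖μ‖ < lam) :
    Tendsto (fun n : ℕ => (Matrix.trace (M ^ n)) ^ ((1 : ℝ) / n)) atTop (𝓝 lam) := by
  classical
  set A : Matrix (Fin m) (Fin m) ℂ := M.map (algebraMap ℝ ℂ) with hA
  have hchar : A.charpoly = (M.charpoly).map (algebraMap ℝ ℂ) :=
    Matrix.charpoly_map M (algebraMap ℝ ℂ)
  have htraceC : ∀ p : ℕ, ((Matrix.trace (M ^ p) : ℝ) : ℂ)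
      = (A.charpoly.roots.map (· ^ p)).sum := by
    intro p
    have h1 : A ^ p = (M ^ p).map (algebraMap ℝ ℂ) := by
      rw [hA, ← RingHom.mapMatrix_apply, ← RingHom.mapMatrix_apply, ← map_pow]
    rw [← aux_trace_pow m (Fin m) (Fintype.card_fin m) A p, h1]
    exact (AddMonoidHom.map_trace (algebraMap ℝ ℂ) (M ^ p))
  set R := A.charpoly.roots with hR
  have hmem : (lam : ℂ) ∈ R := by
    rw [hR, mem_roots A.charpoly_monic.ne_zero, hchar]
    exact hroot
  set k := R.count (lam : ℂ) with hk
  have hk1 : 1 ≤ k := Multiset.count_pos.mpr hmem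
  set T := R.filter (fun x => ¬ x = (lam : ℂ)) with hT
  have hsplit : ∀ p : ℕ, (R.map (· ^ p)).sum
      = (k : ℂ) * (lam : ℂ) ^ p + (T.map (· ^ p)).sum := by
    intro p
    conv_lhs => rw [← Multiset.filter_add_not (fun x => x = (lam : ℂ)) R]
    rw [Multiset.map_add, Multiset.sum_add, Multiset.filter_eq', Multiset.map_replicate,
      Multiset.sum_replicate, nsmul_eq_mul]
  set F : Finset ℝ := insert 0 ((T.map (‖·‖)).toFinset) with hF
  have hFne : F.Nonempty := ⟨0, Finset.mem_insert_self _ _⟩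
  set r := F.max' hFne with hr
  have hr0 : 0 ≤ r := F.le_max' 0 (Finset.mem_insert_self _ _)
  have hmemT : ∀ μ ∈ T, ‖μ‖ ≤ r := by
    intro μ hμT
    exact F.le_max' _ (Finset.mem_insert_of_mem
      (Multiset.mem_toFinset.mpr (Multiset.mem_map_of_mem _ hμT)))
  have hrlam : r < lam := by
    rw [hr]
    rw [Finset.max'_lt_iff]
    intro x hx
    rw [hF, Finset.mem_insert] at hx
    rcases hx with rfl | hx
    · exact hlam
    · rw [Multiset.mem_toFinset] at hx
      obtain ⟨μ, hμT, rfl⟩ := Multiset.mem_map.mp hx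
      rw [hT, Multiset.mem_filter] at hμT
      obtain ⟨hμR, hne⟩ := hμT
      exact hmax μ (by rw [← hchar]; exact (mem_roots A.charpoly_monic.ne_zero).mp hμR) hne
  set c := (Multiset.card T : ℝ) with hc
  have hbound : ∀ p : ℕ, ‖(T.map (· ^ p)).sum‖ ≤ c * r ^ p := by
    intro p
    calc ‖(T.map (· ^ p)).sum‖ ≤ ((T.map (· ^ p)).map norm).sum := norm_multiset_sum_le _
      _ ≤ Multiset.card ((T.map (· ^ p)).map norm) • (r ^ p) := by
          apply Multiset.sum_le_card_nsmul
          intro x hx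
          obtain ⟨y, hy, rfl⟩ := Multiset.mem_map.mp hx
          obtain ⟨μ, hμ, rfl⟩ := Multiset.mem_map.mp hy
          rw [norm_pow]
          exact pow_le_pow_left₀ (norm_nonneg _) (by exact hmemT μ hμ) p
      _ = c * r ^ p := by
          rw [Multiset.card_map, Multiset.card_map, nsmul_eq_mul]
  set q : ℕ → ℝ := fun p => Matrix.trace (M ^ p) / lam ^ p with hq_def
  have hlp : ∀ p : ℕ, (0:ℝ) < lam ^ p := fun p => pow_pos hlam p
  have hqcast : ∀ p : ℕ, ((q p - k : ℝ) : ℂ) = (T.map (· ^ p)).sum / (lam : ℂ) ^ p := by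
    intro p
    have hlpC : ((lam : ℂ)) ^ p ≠ 0 := pow_ne_zero p (by exact_mod_cast hlam.ne')
    have h2 : ((q p : ℝ) : ℂ) = ((Matrix.trace (M ^ p) : ℝ) : ℂ) / (lam : ℂ) ^ p := by
      rw [hq_def]
      push_cast
      ring
    rw [Complex.ofReal_sub, h2, htraceC p, hsplit p]
    field_simp
    push_cast
    ring
  have hqk : Tendsto (fun p => q p - (k:ℝ)) atTop (𝓝 0) := by
    apply squeeze_zero_norm (a := fun p => c * (r / lam) ^ p)
    · intro p
      have h3 : ‖(q p - (k:ℝ))‖ = ‖((q p - k : ℝ) : ℂ)‖ := by rw [Complex.norm_real]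
      rw [h3, hqcast p, norm_div, norm_pow, Complex.norm_real, Real.norm_of_nonneg hlam.le]
      calc ‖(Multiset.map (fun x => x ^ p) T).sum‖ / lam ^ p
          ≤ (c * r ^ p) / lam ^ p := by gcongr; exact hbound p
        _ = c * (r / lam) ^ p := by rw [div_pow]; ring
    · have h4 := tendsto_pow_atTop_nhds_zero_of_lt_one (div_nonneg hr0 hlam.le)
        ((div_lt_one hlam).mpr hrlam)
      simpa using h4.const_mul c
  have hq : Tendsto q atTop (𝓝 (k : ℝ)) := by
    have := hqk.add_const (k : ℝ)
    simpa using this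
  have hkpos : (0:ℝ) < k := by exact_mod_cast hk1
  have hqpos : ∀ᶠ p in atTop, 0 < q p := hq.eventually (eventually_gt_nhds hkpos)
  have hlog : Tendsto (fun p : ℕ => Real.log lam + Real.log (q p) * (1/(p:ℝ)))
      atTop (𝓝 (Real.log lam)) := by
    have h1 : Tendsto (fun p : ℕ => Real.log (q p)) atTop (𝓝 (Real.log k)) :=
      hq.log (ne_of_gt hkpos)
    have h2 := h1.mul tendsto_one_div_atTop_nhds_zero_nat
    rw [mul_zero] at h2
    simpa using (tendsto_const_nhds (x := Real.log lam) (f := atTop)).add h2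
  have hfin : Tendsto (fun p : ℕ => Real.exp (Real.log lam + Real.log (q p) * (1/(p:ℝ))))
      atTop (𝓝 lam) := by
    have h5 := (Real.continuous_exp.tendsto _).comp hlog
    rwa [Real.exp_log hlam] at h5
  apply Filter.Tendsto.congr' ?_ hfin
  filter_upwards [hqpos, eventually_ge_atTop 1] with p hqp hp1
  have htr_eq : Matrix.trace (M ^ p) = q p * lam ^ p := by
    rw [hq_def]
    field_simp
  have htrpos : 0 < Matrix.trace (M ^ p) := by rw [htr_eq]; exact mul_pos hqp (hlp p)
  rw [Real.rpow_def_of_pos htrpos, htr_eq,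
    Real.log_mul (ne_of_gt hqp) (ne_of_gt (hlp p)), Real.log_pow]
  have hp0 : (p:ℝ) ≠ 0 := by
    have : (1:ℝ) ≤ (p:ℝ) := by exact_mod_cast hp1
    linarith
  congr 1
  field_simp
  ring
end

section
/- Let p be a prime and e ≥ 1 a natural number. Let M and B be modules over ℤ/p, let t : M → M be a (ℤ/p)-linear endomorphism such that t − id is surjective, and suppose there are (ℤ/p)-linear maps g : M → B and h : B → ℤ/p such that the sequence M →(t^{p^e} − id) M →g B →h ℤ/p → 0 is exact (range(t^{p^e} − id) = ker(g), range(g) = ker(h), h surjective). Then h is an isomorphism; in particular B is isomorphic to ℤ/p as a (ℤ/p)-module. -/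
/-- The algebraic content of Lemma 2.2: if `t - id` acts surjectively on `M` and
`M →(t^{p^e} - id) M →g B →h ℤ/p → 0` is exact, then `h` is an isomorphism, so
`B ≅ ℤ/p`. -/
theorem stmt_6 (p : ℕ) (hp : p.Prime) (e : ℕ) (he : 1 ≤ e)
    (M B : Type) [AddCommGroup M] [AddCommGroup B]
    [Module (ZMod p) M] [Module (ZMod p) B]
    (t : Module.End (ZMod p) M)
    (ht : Function.Surjective ⇑(t - 1))
    (g : M →ₗ[ZMod p] B) (h : B →ₗ[ZMod p] ZMod p)
    (hfg : LinearMap.range (t ^ (p ^ e) - 1) = LinearMap.ker g)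
    (hgh : LinearMap.range g = LinearMap.ker h)
    (hsurj : Function.Surjective h) :
    Function.Bijective h ∧ Nonempty (B ≃ₗ[ZMod p] ZMod p) := by
  haveI : Fact p.Prime := ⟨hp⟩
  -- The range of `t^(p^e) - 1` is all of `M`.
  have hrange : LinearMap.range (t ^ (p ^ e) - 1) = ⊤ := by
    by_cases hs : Subsingleton M
    · exact Subsingleton.elim _ _
    · haveI : Nontrivial M := not_subsingleton_iff_nontrivial.mp hs
      haveI : CharP (Module.End (ZMod p) M) p := by
        refine charP_of_injective_ringHom (R := ZMod p)
          (f := (algebraMap (ZMod p) (Module.End (ZMod p) M))) ?_ p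
        exact (algebraMap (ZMod p) (Module.End (ZMod p) M)).injective
      have key : t ^ (p ^ e) - 1 = (t - 1) ^ (p ^ e) := by
        rw [sub_pow_char_pow_of_commute p e (Commute.one_right t), one_pow]
      rw [key, LinearMap.range_eq_top]
      have : ∀ n : ℕ, Function.Surjective ⇑((t - 1) ^ n) := by
        intro n
        induction n with
        | zero => simpa [Module.End.one_eq_id] using Function.surjective_id
        | succ n ih =>
          rw [pow_succ]
          exact fun x => by
            obtain ⟨y, hy⟩ := ih x
            obtain ⟨z, hz⟩ := ht y
            exact ⟨z, by simp [Module.End.mul_apply, hz, hy]⟩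
      exact this (p ^ e)
  have hg0 : g = 0 := LinearMap.ker_eq_top.mp (by rw [← hfg, hrange])
  have hker : LinearMap.ker h = ⊥ := by
    rw [← hgh, hg0, LinearMap.range_zero]
  have hinj : Function.Injective h := LinearMap.ker_eq_bot.mp hker
  exact ⟨⟨hinj, hsurj⟩, ⟨LinearEquiv.ofBijective h ⟨hinj, hsurj⟩⟩⟩
end
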